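/- arXiv:0910.0483 — 3 statements merged into one kernel-verified Lean document; each statement's English description precedes it below -/
import Mathlib

section
/- Let ξ be a probability measure on a finite set M, and for each μ ∈ M let μ(x) ≥ 0 denote the likelihood of a fixed observation x. Define the marginal likelihood ξ(x) = Σ_μ μ(x) ξ(μ), assumed positive, and the posterior ξ'(μ) = μ(x) ξ(μ) / ξ(x). Then the posterior marginal likelihood satisfies ξ'(x) = Σ_μ μ(x) ξ'(μ) ≥ ξ(x). -/
open scoped NNReal
open Finset

/- The posterior mean of the likelihood is `(∑ μ, L μ ^ 2 * ξ μ) / ξ(x)`, so the claim says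
that the prior second moment of `L` dominates the square of its prior mean `ξ(x)`: Cauchy–Schwarz
for the vectors `L √ξ` and `√ξ`. -/

theorem sq_sum_mul_le_sum_sq_mul {ι R : Type*} [CommSemiring R] [LinearOrder R]
    [IsStrictOrderedRing R] [ExistsAddOfLE R] (s : Finset ι) (f : ι → R) {w : ι → R}
    (hw : ∀ i ∈ s, 0 ≤ w i) (hw_sum : ∑ i ∈ s, w i = 1) :
    (∑ i ∈ s, f i * w i) ^ 2 ≤ ∑ i ∈ s, f i ^ 2 * w i := by
  have h := sum_sq_le_sum_mul_sum_of_sq_le_mul s (r := fun i ↦ f i * w i)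
    (f := fun i ↦ f i ^ 2 * w i)
    (fun i hi ↦ mul_nonneg (sq_nonneg _) (hw i hi)) hw (fun i _ ↦ (by ring : _ = _).le)
  rwa [hw_sum, mul_one] at h

theorem stmt0_general {M : Type*} [Fintype M] (ξ L : M → ℝ≥0)
    (hξ : ∑ μ, ξ μ = 1) :
    ∑ μ, L μ * (L μ * ξ μ / (∑ ν, L ν * ξ ν)) ≥ ∑ μ, L μ * ξ μ := by
  set S := ∑ ν, L ν * ξ ν
  calc S = S * S / S := (mul_self_div_self S).symm
    _ ≤ (∑ μ, L μ ^ 2 * ξ μ) / S := by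
      gcongr
      simpa only [sq] using sq_sum_mul_le_sum_sq_mul univ L (fun _ _ ↦ zero_le) hξ
    _ = ∑ μ, L μ * (L μ * ξ μ / S) := by
      simp only [sum_div, sq, mul_assoc, mul_div_assoc]

theorem stmt0 {M : Type*} [Fintype M] (ξ L : M → ℝ≥0)
    (hξ : ∑ μ, ξ μ = 1) (hm : 0 < ∑ μ, L μ * ξ μ) :
    ∑ μ, L μ * (L μ * ξ μ / (∑ ν, L ν * ξ ν)) ≥ ∑ μ, L μ * ξ μ :=
  stmt0_general ξ L hξ
end

section
/- With the setup of the previous statement (finite M, repeated Bayesian updates on the same observation with likelihood L), the sequence m_n = Σ_μ L(μ)ξ_n(μ) converges to max{L(μ) : μ ∈ supp(ξ)}. -/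
/-!
Conditioning `n` times on the same likelihood gives `ξₙ(μ) ∝ L(μ)ⁿ ξ(μ)`, so with
`Sₙ = ∑ μ, L(μ)ⁿ ξ(μ)` the marginal likelihood is `Sₙ₊₁ / Sₙ`. If `a` is the largest likelihood
on the support, `Sₙ / aⁿ` tends to the (positive) prior mass of the maximisers, and then the
ratio `Sₙ₊₁ / Sₙ` tends to `a`.
-/

open Filter Topology Finset

theorem tendsto_pow_of_nonneg_of_le_one {r : ℝ} (h0 : 0 ≤ r) (h1 : r ≤ 1) :
    Tendsto (fun n : ℕ => r ^ n) atTop (𝓝 (if r = 1 then 1 else 0)) := by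
  rcases h1.eq_or_lt with rfl | hlt
  · simp
  · rw [if_neg hlt.ne]
    exact tendsto_pow_atTop_nhds_zero_of_lt_one h0 hlt

theorem tendsto_sum_pow_mul_div_pow {M : Type*} [Fintype M] {L w : M → ℝ} {a : ℝ} (ha : 0 < a)
    (hL : ∀ μ, w μ ≠ 0 → L μ ∈ Set.Icc 0 a) :
    Tendsto (fun n : ℕ => (∑ μ, L μ ^ n * w μ) / a ^ n) atTop
      (𝓝 (∑ μ ∈ univ.filter (L · = a), w μ)) := by
  classical
  simp_rw [sum_filter, sum_div, mul_div_right_comm, ← div_pow]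
  refine tendsto_finsetSum _ fun μ _ => ?_
  by_cases hw : w μ = 0
  · simp [hw]
  obtain ⟨hL0, hLa⟩ := hL μ hw
  have hr := (tendsto_pow_of_nonneg_of_le_one (div_nonneg hL0 ha.le)
    ((div_le_one ha).mpr hLa)).mul_const (w μ)
  simpa only [div_eq_one_iff_eq ha.ne', ite_mul, one_mul, zero_mul] using hr

theorem tendsto_succ_div_of_tendsto_div_pow {K : Type*} [NormedField K] {S : ℕ → K} {a c : K}
    (ha : a ≠ 0) (hc : c ≠ 0) (h : Tendsto (fun n => S n / a ^ n) atTop (𝓝 c)) :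
    Tendsto (fun n => S (n + 1) / S n) atTop (𝓝 a) := by
  have key : ∀ n, S (n + 1) / S n = a * (S (n + 1) / a ^ (n + 1)) / (S n / a ^ n) := fun n => by
    rw [pow_succ, ← div_div, mul_div_cancel₀ _ ha, div_div_div_cancel_right₀ (pow_ne_zero n ha)]
  simp_rw [key]
  have hlim := ((tendsto_add_atTop_iff_nat 1).mpr h |>.const_mul a).div h hc
  rwa [mul_div_cancel_right₀ a hc] at hlim

theorem bayes_iterate_succ {K M : Type*} [Field K] [Fintype M] (L : M → K) (ξseq : ℕ → M → K)
    (hrec : ∀ n μ, ξseq (n + 1) μ = L μ * ξseq n μ / ∑ ν, L ν * ξseq n ν)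
    (hS : ∀ n, ∑ ν, L ν ^ (n + 1) * ξseq 0 ν ≠ 0) (n : ℕ) (μ : M) :
    ξseq (n + 1) μ = L μ ^ (n + 1) * ξseq 0 μ / ∑ ν, L ν ^ (n + 1) * ξseq 0 ν := by
  induction n generalizing μ with
  | zero => simp [hrec]
  | succ n ih =>
    simp_rw [hrec (n + 1), ih, mul_div_assoc', ← sum_div, ← mul_assoc, ← pow_succ',
      div_div_div_cancel_right₀ (hS n)]

theorem sum_mul_bayes_iterate_succ {K M : Type*} [Field K] [Fintype M] (L : M → K)
    (ξseq : ℕ → M → K) (hrec : ∀ n μ, ξseq (n + 1) μ = L μ * ξseq n μ / ∑ ν, L ν * ξseq n ν)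
    (hS : ∀ n, ∑ ν, L ν ^ (n + 1) * ξseq 0 ν ≠ 0) (n : ℕ) :
    ∑ μ, L μ * ξseq (n + 1) μ =
      (∑ μ, L μ ^ (n + 2) * ξseq 0 μ) / ∑ μ, L μ ^ (n + 1) * ξseq 0 μ := by
  simp_rw [bayes_iterate_succ L ξseq hrec hS n, mul_div_assoc', ← sum_div, ← mul_assoc,
    ← pow_succ']

theorem stmt5_general {M : Type*} [Fintype M] (ξ L : M → ℝ)
    (hξ0 : ∀ μ, 0 ≤ ξ μ) (hL : ∀ μ, 0 ≤ L μ)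
    (hm : 0 < ∑ μ, L μ * ξ μ)
    (ξseq : ℕ → M → ℝ) (h0 : ξseq 0 = ξ)
    (hrec : ∀ n μ, ξseq (n + 1) μ = L μ * ξseq n μ / ∑ ν, L ν * ξseq n ν) :
    Filter.Tendsto (fun n => ∑ μ, L μ * ξseq n μ) Filter.atTop
      (nhds (⨆ μ : {μ : M // 0 < ξ μ}, L μ)) := by
  obtain ⟨μs, -, hμs⟩ := exists_lt_of_sum_lt (s := univ) (f := fun _ => (0 : ℝ))
    (g := fun μ => L μ * ξ μ) (by simpa using hm)
  have hξs : 0 < ξ μs := pos_of_mul_pos_right hμs (hL μs)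
  have hLs : 0 < L μs := pos_of_mul_pos_left hμs (hξ0 μs)
  have : Nonempty {μ : M // 0 < ξ μ} := ⟨⟨μs, hξs⟩⟩
  set a := ⨆ μ : {μ : M // 0 < ξ μ}, L μ
  obtain ⟨μ0, hμ0⟩ := exists_eq_ciSup_of_finite (f := fun μ : {μ : M // 0 < ξ μ} => L μ)
  have hle : ∀ μ, 0 < ξ μ → L μ ≤ a := fun μ hμ =>
    le_ciSup (f := fun μ : {μ : M // 0 < ξ μ} => L μ) (Finite.bddAbove_range _) ⟨μ, hμ⟩
  have ha : 0 < a := hLs.trans_le (hle μs hξs)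
  have hS : ∀ n, 0 < ∑ ν, L ν ^ n * ξ ν := fun n =>
    sum_pos' (fun ν _ => mul_nonneg (pow_nonneg (hL ν) n) (hξ0 ν))
      ⟨μs, mem_univ _, mul_pos (pow_pos hLs n) hξs⟩
  have hc : 0 < ∑ μ ∈ univ.filter (L · = a), ξ μ :=
    sum_pos' (fun μ _ => hξ0 μ) ⟨μ0, mem_filter.mpr ⟨mem_univ _, hμ0⟩, μ0.2⟩
  have hratio := tendsto_succ_div_of_tendsto_div_pow ha.ne' hc.ne'
    (tendsto_sum_pow_mul_div_pow ha fun μ hμ =>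
      ⟨hL μ, hle μ ((hξ0 μ).lt_of_ne' hμ)⟩)
  have hS' : ∀ n, ∑ ν, L ν ^ (n + 1) * ξseq 0 ν ≠ 0 := fun n => h0 ▸ (hS (n + 1)).ne'
  rw [← tendsto_add_atTop_iff_nat 1]
  simpa only [sum_mul_bayes_iterate_succ L ξseq hrec hS', h0] using
    (tendsto_add_atTop_iff_nat 1).mpr hratio

theorem stmt5 {M : Type*} [Fintype M] (ξ L : M → ℝ)
    (hξ0 : ∀ μ, 0 ≤ ξ μ) (hξ1 : ∑ μ, ξ μ = 1) (hL : ∀ μ, 0 ≤ L μ)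
    (hm : 0 < ∑ μ, L μ * ξ μ)
    (ξseq : ℕ → M → ℝ) (h0 : ξseq 0 = ξ)
    (hrec : ∀ n μ, ξseq (n + 1) μ = L μ * ξseq n μ / ∑ ν, L ν * ξseq n ν) :
    Filter.Tendsto (fun n => ∑ μ, L μ * ξseq n μ) Filter.atTop
      (nhds (⨆ μ : {μ : M // 0 < ξ μ}, L μ)) :=
  stmt5_general ξ L hξ0 hL hm ξseq h0 hrec
end

section
/- Equality characterization for Lemma 1 in the discrete case: for a finite model set M, prior ξ with full support, and likelihoods L : M → ℝ≥0 with Σ L(μ)ξ(μ) > 0, the posterior marginal satisfies ξ'(x) = ξ(x) if and only if L is constant on M. -/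
/-! The posterior marginal is `∑ ξ L² / ∑ ξ L`, so it equals the prior marginal `∑ ξ L` exactly when
`∑ ξ L² = (∑ ξ L)²`, i.e. when the variance of `L` under `ξ` vanishes. As `ξ` has full support,
this forces `L` to be constant. -/

open Finset

section WeightedVariance

variable {ι : Type*} {s : Finset ι} {w : ι → ℝ} (f : ι → ℝ)

theorem sum_mul_sub_sq_eq_of_sum_eq_one (hw : ∑ i ∈ s, w i = 1) :
    ∑ i ∈ s, w i * (f i - ∑ j ∈ s, w j * f j) ^ 2 =
      ∑ i ∈ s, w i * f i ^ 2 - (∑ i ∈ s, w i * f i) ^ 2 := by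
  set m := ∑ j ∈ s, w j * f j
  calc ∑ i ∈ s, w i * (f i - m) ^ 2
      = ∑ i ∈ s, (w i * f i ^ 2 - 2 * m * (w i * f i) + m ^ 2 * w i) :=
        sum_congr rfl fun i _ => by ring
    _ = ∑ i ∈ s, w i * f i ^ 2 - 2 * m * m + m ^ 2 * ∑ i ∈ s, w i := by
        rw [sum_add_distrib, sum_sub_distrib, ← mul_sum, ← mul_sum]
    _ = ∑ i ∈ s, w i * f i ^ 2 - m ^ 2 := by rw [hw]; ring

theorem eq_of_sum_mul_sub_sq_eq_zero (hw : ∀ i ∈ s, 0 < w i) {c : ℝ}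
    (h : ∑ i ∈ s, w i * (f i - c) ^ 2 = 0) : ∀ i ∈ s, f i = c := by
  intro i hi
  have hterm := (sum_eq_zero_iff_of_nonneg fun j hj => mul_nonneg (hw j hj).le (sq_nonneg _)).mp
    h i hi
  have := (mul_eq_zero.mp hterm).resolve_left (hw i hi).ne'
  exact sub_eq_zero.mp (pow_eq_zero_iff two_ne_zero |>.mp this)

theorem sum_mul_sq_eq_sq_sum_mul_iff (hw : ∀ i ∈ s, 0 < w i) (hw1 : ∑ i ∈ s, w i = 1) :
    ∑ i ∈ s, w i * f i ^ 2 = (∑ i ∈ s, w i * f i) ^ 2 ↔ ∀ i ∈ s, ∀ j ∈ s, f i = f j := by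
  rw [← sub_eq_zero, ← sum_mul_sub_sq_eq_of_sum_eq_one f hw1]
  constructor
  · intro h i hi j hj
    have hmean := eq_of_sum_mul_sub_sq_eq_zero f hw h
    rw [hmean i hi, hmean j hj]
  · intro h
    refine sum_eq_zero fun i hi => ?_
    have hmean : ∑ j ∈ s, w j * f j = f i := by
      rw [sum_congr rfl fun j hj => by rw [h j hj i hi], ← sum_mul, hw1, one_mul]
    rw [hmean, sub_self]
    ring

end WeightedVariance

theorem stmt19_general {M : Type*} [Fintype M] (ξ L : M → ℝ)
    (hξ0 : ∀ μ, 0 < ξ μ) (hξ1 : ∑ μ, ξ μ = 1)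
    (hm : 0 < ∑ μ, L μ * ξ μ) :
    (∑ μ, L μ * (L μ * ξ μ / ∑ ν, L ν * ξ ν)) = ∑ μ, L μ * ξ μ ↔
      ∀ μ ν : M, L μ = L ν := by
  have hposterior : ∑ μ, L μ * (L μ * ξ μ / ∑ ν, L ν * ξ ν) =
      (∑ μ, ξ μ * L μ ^ 2) / ∑ ν, L ν * ξ ν := by
    rw [sum_div]
    exact sum_congr rfl fun μ _ => by ring
  have hprior : ∑ μ, L μ * ξ μ = ∑ μ, ξ μ * L μ := sum_congr rfl fun μ _ => mul_comm _ _
  rw [hposterior, div_eq_iff hm.ne', ← sq, hprior,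
    sum_mul_sq_eq_sq_sum_mul_iff L (fun μ _ => hξ0 μ) hξ1]
  simp only [mem_univ, forall_const]

theorem stmt19 {M : Type*} [Fintype M] (ξ L : M → ℝ)
    (hξ0 : ∀ μ, 0 < ξ μ) (hξ1 : ∑ μ, ξ μ = 1) (hL : ∀ μ, 0 ≤ L μ)
    (hm : 0 < ∑ μ, L μ * ξ μ) :
    (∑ μ, L μ * (L μ * ξ μ / ∑ ν, L ν * ξ ν)) = ∑ μ, L μ * ξ μ ↔
      ∀ μ ν : M, L μ = L ν :=
  stmt19_general ξ L hξ0 hξ1 hm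
end
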